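/- arXiv:2207.03793 — 3 statements merged into one kernel-verified Lean document; each statement's English description precedes it below -/
import Mathlib

section
/- Let G be an edge-colored graph. Suppose that for each vertex v of G there exist a vertex v' and two internally vertex-disjoint PC paths P and Q from v to v' such that the first edge of P at v and the first edge of Q at v have distinct colors (i.e., ch(P) = [v, α_1, β_1, v'], ch(Q) = [v, α_2, β_2, v'] with α_1 ≠ α_2). Then G contains a properly colored cycle. -/
/-!
Suppose there is no PC cycle. Call `(U, t, β)` a funnel if `t ∈ U` and every other vertex of `U`
reaches `t` inside `U` by two PC paths that end in colour `β` and start in different colours.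
Singletons are funnels, so, `V` being finite, there is a funnel with maximal `U`. The hypothesis
at `t` yields paths `P, Q` to some `t'`; they end in the same colour `b`, since otherwise
`P ∪ Q` is a PC cycle, and one of them, `R`, leaves `t` in a colour other than `β`. If `R`
returns to `U`, follow it to its first return and go back to `t` inside `U`: this closes a PC
cycle. Otherwise `(U ∪ P ∪ Q, t', b)` is a funnel, contradicting the maximality of `U`.
-/

/-- `IsPCPath G col l`: the list of vertices `l` is a properly colored (PC) path in the
edge-colored graph `(G, col)`: it is nonempty, has no repeated vertices, consecutive
vertices are adjacent in `G`, and every two consecutive edges have distinct colors. -/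
def IsPCPath {V γ : Type*} (G : SimpleGraph V) (col : V → V → γ) (l : List V) : Prop :=
  l ≠ [] ∧ l.Nodup ∧ l.Chain' G.Adj ∧
    ∀ a b c : V, [a, b, c] <:+: l → col a b ≠ col b c

/-- `IsPCCycle G col l`: the list of vertices `l` is a properly colored (PC) cycle in the
edge-colored graph `(G, col)`: it has at least 3 distinct vertices, cyclically consecutive
vertices are adjacent in `G`, and every two cyclically consecutive edges (including at the
vertex where the cycle closes) have distinct colors. -/
def IsPCCycle {V γ : Type*} (G : SimpleGraph V) (col : V → V → γ) (l : List V) : Prop :=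
  3 ≤ l.length ∧ l.Nodup ∧ (l ++ l.take 2).Chain' G.Adj ∧
    ∀ a b c : V, [a, b, c] <:+: (l ++ l.take 2) → col a b ≠ col b c

/-- `HasChar col l u x y u'`: the path `l` has character `[u, x, y, u']`, i.e. it starts at
`u` with first edge of color `x` and ends at `u'` with last edge of color `y`. -/
def HasChar {V γ : Type*} (col : V → V → γ) (l : List V) (u : V) (x y : γ) (u' : V) : Prop :=
  (∃ b t, l = u :: b :: t ∧ col u b = x) ∧
  (∃ b t, l.reverse = u' :: b :: t ∧ col u' b = y)

/-- `IsCycleEdge c v v'`: `v` and `v'` are (cyclically) consecutive vertices of the cycle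
represented by the list `c`, i.e. `vv'` is an edge of the cycle. -/
def IsCycleEdge {V : Type*} (c : List V) (v v' : V) : Prop :=
  [v, v'] <:+: (c ++ c.take 1) ∨ [v', v] <:+: (c ++ c.take 1)

theorem List.cons_reverse_subset {α : Type*} {p q : List α} {m : α} :
    m :: p.reverse ⊆ p ++ m :: q := by
  intro w hw
  simp only [List.mem_cons, List.mem_reverse] at hw
  simp only [List.mem_append, List.mem_cons]
  tauto

section

variable {V γ : Type*} {G : SimpleGraph V} {col : V → V → γ}

theorem HasChar.reverse {l : List V} {s t : V} {x y : γ} (h : HasChar col l s x y t) :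
    HasChar col l.reverse t y x s :=
  ⟨h.2, by simpa using h.1⟩

theorem HasChar.append_tail {p q : List V} {s m t : V} {x y x' y' : γ}
    (hp : HasChar col p s x y m) (hq : HasChar col q m x' y' t) :
    HasChar col (p ++ q.tail) s x y' t := by
  obtain ⟨⟨b, r, rfl, hx⟩, ⟨a, p', hp', -⟩⟩ := hp
  obtain ⟨⟨c, q', rfl, -⟩, ⟨b', r', hq', hy⟩⟩ := hq
  refine ⟨⟨b, r ++ c :: q', rfl, hx⟩, ⟨b', r' ++ a :: p', ?_, hy⟩⟩
  rw [List.tail_cons, List.reverse_append, hp']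
  simpa using congrArg (· ++ a :: p') hq'

theorem HasChar.col_eq_of_length_eq_two {l : List V} {s t : V} {x y : γ}
    (h : HasChar col l s x y t) (hl : l.length = 2) : col t s = y := by
  obtain ⟨⟨b, r, rfl, -⟩, ⟨b', r', h', hy⟩⟩ := h
  obtain rfl : r = [] := by simpa using hl
  simp only [List.reverse_cons, List.reverse_nil, List.nil_append, List.cons_append,
    List.cons.injEq] at h'
  rw [← h'.2.1] at hy
  exact hy

/-- The local conditions of `IsPCPath`, with repeated vertices allowed: `IsPCPath G col l`
unfolds to `l ≠ [] ∧ l.Nodup ∧ IsPCWalk G col l`. -/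
def IsPCWalk (G : SimpleGraph V) (col : V → V → γ) (l : List V) : Prop :=
  l.IsChain G.Adj ∧ ∀ a b c : V, [a, b, c] <:+: l → col a b ≠ col b c

theorem isPCCycle_iff {l : List V} :
    IsPCCycle G col l ↔ 3 ≤ l.length ∧ l.Nodup ∧ IsPCWalk G col (l ++ l.take 2) := Iff.rfl

theorem IsPCWalk.infix {l l' : List V} (hl : IsPCWalk G col l) (h : l' <:+: l) :
    IsPCWalk G col l' :=
  ⟨hl.1.infix h, fun a b c habc => hl.2 a b c (habc.trans h)⟩

theorem IsPCWalk.reverse (hsym : ∀ u v, col u v = col v u) {l : List V}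
    (hl : IsPCWalk G col l) : IsPCWalk G col l.reverse := by
  refine ⟨List.isChain_reverse.mpr (hl.1.imp fun _ _ h => h.symm), fun a b c habc => ?_⟩
  rw [hsym a b, hsym b c]
  exact (hl.2 c b a (by simpa using habc.reverse)).symm

theorem IsPCWalk.append_cons_cons {p q : List V} {a m c : V}
    (hp : IsPCWalk G col (p ++ [a, m])) (hq : IsPCWalk G col (m :: c :: q))
    (h : col a m ≠ col m c) : IsPCWalk G col (p ++ a :: m :: c :: q) := by
  have e : p ++ a :: m :: c :: q = (p ++ [a, m]) ++ c :: q := by simp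
  rw [e]
  refine ⟨List.isChain_append.mpr ⟨hp.1, hq.1.infix (List.suffix_cons _ _).isInfix,
    by simpa using (List.isChain_cons_cons.mp hq.1).1⟩, fun x y z hxyz => ?_⟩
  rcases List.infix_append_iff_ne_nil.mp hxyz with h1 | h2 | ⟨l₁, l₂, h₁, h₂, hl, hs, hpre⟩
  · exact hp.2 x y z h1
  · exact hq.2 x y z (h2.trans (List.suffix_cons _ _).isInfix)
  · -- the triple straddles the junction, so it is `[m, c, _]` or `[a, m, c]`
    rw [← List.reverse_prefix] at hs
    rcases l₁ with _ | ⟨u, _ | ⟨v, _ | ⟨w, l₁⟩⟩⟩ <;> rcases l₂ with _ | ⟨u', l₂⟩ <;>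
      simp [List.cons_prefix_cons] at hs hpre hl h₁ h₂
    · obtain ⟨rfl, rfl, rfl⟩ := hl
      subst hs
      obtain ⟨rfl, hz⟩ := hpre
      exact hq.2 _ _ _ (List.IsPrefix.isInfix (by simpa [List.cons_prefix_cons] using hz))
    · obtain ⟨rfl, rfl, rfl, -⟩ := hl
      obtain ⟨rfl, rfl⟩ := hs
      exact hpre.1 ▸ h

theorem IsPCWalk.append_tail (hsym : ∀ u v, col u v = col v u) {p q : List V} {s m t : V}
    {x y x' y' : γ} (hp : IsPCWalk G col p) (hq : IsPCWalk G col q)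
    (hpc : HasChar col p s x y m) (hqc : HasChar col q m x' y' t) (h : y ≠ x') :
    IsPCWalk G col (p ++ q.tail) := by
  obtain ⟨a, p', hp', hy⟩ := hpc.2
  obtain ⟨c, q', rfl, hx'⟩ := hqc.1
  rw [List.reverse_eq_cons_iff, List.reverse_cons] at hp'
  subst hp'
  simp only [List.append_assoc, List.singleton_append, List.tail_cons] at hp ⊢
  exact hp.append_cons_cons hq (by rw [hsym, hy, hx']; exact h)

def IsPCPathWithChar (G : SimpleGraph V) (col : V → V → γ) (l : List V) (s : V) (x y : γ)
    (t : V) : Prop :=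
  IsPCPath G col l ∧ HasChar col l s x y t

namespace IsPCPathWithChar

variable {l p q : List V} {s m t : V} {x y x' y' : γ}

theorem start_mem (h : IsPCPathWithChar G col l s x y t) : s ∈ l := by
  obtain ⟨b, r, rfl, -⟩ := h.2.1
  exact List.mem_cons_self

theorem end_mem (h : IsPCPathWithChar G col l s x y t) : t ∈ l := by
  obtain ⟨b, r, hr, -⟩ := h.2.2
  exact List.mem_reverse.mp (hr ▸ List.mem_cons_self)

theorem reverse (hsym : ∀ u v, col u v = col v u) (h : IsPCPathWithChar G col l s x y t) :
    IsPCPathWithChar G col l.reverse t y x s :=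
  ⟨⟨by simpa using h.1.1, List.nodup_reverse.mpr h.1.2.1, IsPCWalk.reverse hsym h.1.2.2⟩,
    h.2.reverse⟩

theorem append_tail (hsym : ∀ u v, col u v = col v u)
    (hp : IsPCPathWithChar G col p s x y m) (hq : IsPCPathWithChar G col q m x' y' t)
    (h : y ≠ x') (hdisj : ∀ w ∈ p, w ∈ q → w = m) :
    IsPCPathWithChar G col (p ++ q.tail) s x y' t := by
  obtain ⟨⟨hp0, hpnd, hpw⟩, hpc⟩ := hp
  obtain ⟨⟨-, hqnd, hqw⟩, hqc⟩ := hq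
  obtain ⟨c, q', rfl, -⟩ := hqc.1
  obtain ⟨hm, hq'nd⟩ := List.nodup_cons.mp hqnd
  refine ⟨⟨by simp [hp0], List.nodup_append.mpr ⟨hpnd, hq'nd, ?_⟩,
    IsPCWalk.append_tail hsym hpw hqw hpc hqc h⟩, hpc.append_tail hqc⟩
  rintro w hwp _ hwq rfl
  exact hm (hdisj w hwp (List.mem_cons_of_mem _ hwq) ▸ hwq)

theorem takeUntil (h : IsPCPathWithChar G col l s x y t) (hl : l = p ++ m :: q) (hm : m ≠ s) :
    ∃ y', IsPCPathWithChar G col (p ++ [m]) s x y' m := by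
  obtain ⟨⟨-, hnd, hw⟩, ⟨b, r, hbr, hx⟩, -⟩ := h
  obtain ⟨p, u, rfl⟩ : ∃ p' u, p = p' ++ [u] := by
    rcases p.eq_nil_or_concat with rfl | ⟨p', u, rfl⟩
    · simp only [List.nil_append, hbr, List.cons.injEq] at hl
      exact absurd hl.1.symm hm
    · exact ⟨p', u, List.concat_eq_append ..⟩
  have hpre : p ++ [u] ++ [m] <+: l := ⟨q, by simp [hl]⟩
  refine ⟨col m u, ⟨⟨by simp, hnd.sublist hpre.sublist, IsPCWalk.infix hw hpre.isInfix⟩,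
    ?_, ⟨u, p.reverse, by simp, rfl⟩⟩⟩
  rw [List.prefix_iff_eq_take.mp hpre, hbr]
  exact ⟨b, r.take p.length, by simp, hx⟩

theorem split (hsym : ∀ u v, col u v = col v u) (h : IsPCPathWithChar G col l s x y t)
    (hl : l = p ++ m :: q) (hs : m ≠ s) (ht : m ≠ t) :
    ∃ x₁ x₂, x₁ ≠ x₂ ∧ IsPCPathWithChar G col (m :: q) m x₁ y t ∧
      IsPCPathWithChar G col (m :: p.reverse) m x₂ x s := by
  obtain ⟨y₁, h₁⟩ := h.takeUntil hl hs
  obtain ⟨y₂, h₂⟩ := (h.reverse hsym).takeUntil (p := q.reverse) (q := p.reverse) (by simp [hl]) ht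
  have h₁' := h₁.reverse hsym
  have h₂' := h₂.reverse hsym
  simp only [List.reverse_append, List.reverse_cons, List.reverse_nil, List.nil_append,
    List.reverse_reverse, List.singleton_append] at h₁' h₂'
  refine ⟨y₂, y₁, ?_, h₂', h₁'⟩
  obtain ⟨w, q', hq, hw⟩ := h₂'.2.1
  obtain ⟨u, p', hp, hu⟩ := h₁'.2.1
  rw [List.cons.injEq, List.reverse_eq_cons_iff] at hp
  have hinf : [u, m, w] <:+: l := ⟨p'.reverse, q', by rw [hl, hp.2, (List.cons.inj hq).2]; simp⟩
  rw [← hw, ← hu, hsym m u]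
  exact (h.1.2.2.2 u m w hinf).symm

theorem eq_nil_of_eq_append_end (h : IsPCPathWithChar G col l s x y t)
    (hl : l = p ++ t :: q) : q = [] := by
  obtain ⟨b, r, hr, -⟩ := h.2.2
  have ht : t ∉ q := (List.nodup_cons.mp (List.nodup_append.mp (hl ▸ h.1.2.1)).2.1).1
  rcases hq : q.reverse with _ | ⟨c, q''⟩
  · simpa using hq
  · rw [hl, List.reverse_append, List.reverse_cons, hq] at hr
    simp only [List.cons_append, List.cons.injEq] at hr
    exact absurd (List.mem_reverse.mp (hq ▸ hr.1 ▸ List.mem_cons_self)) ht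

theorem start_ne_end (h : IsPCPathWithChar G col l s x y t) : s ≠ t := by
  rintro rfl
  obtain ⟨b, r, hl, -⟩ := h.2.1
  simpa using h.eq_nil_of_eq_append_end (p := []) hl

theorem end_notMem_of_eq_append (h : IsPCPathWithChar G col l s x y t) (hl : l = p ++ m :: q) :
    t ∉ p := by
  intro ht
  obtain ⟨p₁, p₂, rfl⟩ := List.append_of_mem ht
  simpa using h.eq_nil_of_eq_append_end (p := p₁) (q := p₂ ++ m :: q) (by simp [hl])

end IsPCPathWithChar

theorem isPCCycle_of_closed_walk (hsym : ∀ u v, col u v = col v u) {D : List V} {s : V}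
    {a₁ a₂ : γ} (hw : IsPCWalk G col (D ++ [s])) (hc : HasChar col (D ++ [s]) s a₁ a₂ s)
    (ha : a₁ ≠ a₂) (hlen : 3 ≤ D.length) (hnd : D.Nodup) : IsPCCycle G col D := by
  obtain ⟨u, r, hDu, hu⟩ := hc.1
  have hDs : D.take 2 = [s, u] := by
    rw [← List.take_append_of_le_length (l₂ := [s]) (by omega), hDu]
    rfl
  have hsu : IsPCWalk G col [s, u] := hw.infix ⟨[], r, by simp [hDu]⟩
  have hsuc : HasChar col [s, u] s a₁ a₁ u := ⟨⟨u, [], rfl, hu⟩, ⟨s, [], rfl, hsym u s ▸ hu⟩⟩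
  have := IsPCWalk.append_tail hsym hw hsu hc hsuc ha.symm
  rw [List.tail_cons, List.append_assoc, List.singleton_append, ← hDs] at this
  exact isPCCycle_iff.mpr ⟨hlen, hnd, this⟩

theorem exists_isPCCycle_of_paths (hsym : ∀ u v, col u v = col v u) {P Q : List V} {s t : V}
    {a₁ b₁ a₂ b₂ : γ} (hP : IsPCPathWithChar G col P s a₁ b₁ t)
    (hQ : IsPCPathWithChar G col Q s a₂ b₂ t) (ha : a₁ ≠ a₂) (hb : b₁ ≠ b₂)
    (hdisj : ∀ w ∈ P, w ∈ Q → w = s ∨ w = t) :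
    ∃ C, IsPCCycle G col C := by
  have hQr := hQ.reverse hsym
  -- the closed walk runs along `P` and back along `Q`; the cycle is this walk minus its end
  have hWw := IsPCWalk.append_tail hsym hP.1.2.2 hQr.1.2.2 hP.2 hQr.2 hb
  have hWc := hP.2.append_tail hQr.2
  obtain ⟨D, hWD⟩ : ∃ D, P ++ Q.reverse.tail = D ++ [s] := by
    obtain ⟨c, C, h, -⟩ := hWc.2
    exact ⟨_, List.reverse_eq_cons_iff.mp h⟩
  rw [hWD] at hWw hWc
  refine ⟨D, isPCCycle_of_closed_walk hsym hWw hWc ha ?_ ?_⟩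
  · have h1 := congrArg List.length hWD
    have hP2 : 2 ≤ P.length := by obtain ⟨u, P', rfl, -⟩ := hP.2.1; simp
    have hQ2 : 2 ≤ Q.length := by obtain ⟨u, Q', rfl, -⟩ := hQ.2.1; simp
    simp only [List.length_append, List.length_tail, List.length_reverse,
      List.length_singleton] at h1
    by_contra! h2
    exact hb ((hP.2.col_eq_of_length_eq_two (by omega)).symm.trans
      (hQ.2.col_eq_of_length_eq_two (by omega)))
  · obtain ⟨u, P', hPu, -⟩ := hP.2.1
    obtain ⟨c, Q', hQc, -⟩ := hQr.2.1
    obtain ⟨D', rfl⟩ : ∃ D', D = s :: D' := by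
      rcases D with _ | ⟨d, D'⟩
      · simp [hPu] at hWD
      · simp only [hPu, List.cons_append, List.cons.injEq] at hWD
        exact ⟨D', by rw [hWD.1]⟩
    have hPnd := hP.1.2.1
    have hQnd := hQr.1.2.1
    rw [hPu, List.nodup_cons] at hPnd
    rw [hQc, List.nodup_cons] at hQnd
    have hWt : (u :: P') ++ (c :: Q') = D' ++ [s] := by
      simpa [hPu, hQc] using congrArg List.tail hWD
    rw [← List.singleton_append, List.nodup_append_comm, ← hWt]
    refine List.nodup_append.mpr ⟨hPnd.2, hQnd.2, fun w hwP _ hwQ hww => ?_⟩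
    subst hww
    rcases hdisj w (hPu ▸ List.mem_cons_of_mem s hwP)
      (List.mem_reverse.mp (hQc ▸ List.mem_cons_of_mem t hwQ)) with rfl | rfl
    · exact hPnd.1 hwP
    · exact hQnd.1 hwQ

/-- Asking for a path whose first colour avoids every given `c` amounts to asking for two paths
with distinct first colours. -/
def ReachesFlexibly (G : SimpleGraph V) (col : V → V → γ) (U : Set V) (s t : V) (β : γ) :
    Prop :=
  ∀ c : γ, ∃ ρ x, x ≠ c ∧ IsPCPathWithChar G col ρ s x β t ∧ ∀ w ∈ ρ, w ∈ U

def IsFunnel (G : SimpleGraph V) (col : V → V → γ) (U : Set V) (t : V) (β : γ) : Prop :=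
  t ∈ U ∧ ∀ s ∈ U, s ≠ t → ReachesFlexibly G col U s t β

section Funnel

variable {U : Set V} {R R₂ : List V} {s t t' : V} {β aR aR₂ b : γ}

theorem reachesFlexibly_of_ne {ρ₁ ρ₂ : List V} {x₁ x₂ : γ}
    (h₁ : IsPCPathWithChar G col ρ₁ s x₁ β t) (h₂ : IsPCPathWithChar G col ρ₂ s x₂ β t)
    (hx : x₁ ≠ x₂) (hU₁ : ∀ w ∈ ρ₁, w ∈ U) (hU₂ : ∀ w ∈ ρ₂, w ∈ U) :
    ReachesFlexibly G col U s t β := by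
  intro c
  by_cases hc : x₁ = c
  · exact ⟨ρ₂, x₂, hc ▸ hx.symm, h₂, hU₂⟩
  · exact ⟨ρ₁, x₁, hc, h₁, hU₁⟩

theorem ReachesFlexibly.mono {U' : Set V} (h : ReachesFlexibly G col U s t β) (hU : U ⊆ U') :
    ReachesFlexibly G col U' s t β := fun c =>
  let ⟨ρ, x, hxc, hρ, hρU⟩ := h c
  ⟨ρ, x, hxc, hρ, fun w hw => hU (hρU w hw)⟩

theorem reachesFlexibly_of_mem_path (hsym : ∀ u v, col u v = col v u)
    (hR : IsPCPathWithChar G col R t aR b t') (hR₂ : IsPCPathWithChar G col R₂ t aR₂ b t')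
    (ha : aR ≠ aR₂) (hdisj : ∀ w ∈ R, w ∈ R₂ → w = t ∨ w = t') (hs : s ∈ R) (hst' : s ≠ t') :
    ReachesFlexibly G col {w | w ∈ R ∨ w ∈ R₂} s t' b := by
  by_cases hst : s = t
  · subst hst
    exact reachesFlexibly_of_ne hR hR₂ ha (fun w hw => Or.inl hw) (fun w hw => Or.inr hw)
  obtain ⟨l₁, l₂, hl⟩ := List.append_of_mem hs
  obtain ⟨x₁, x₂, hx, hS, hB⟩ := hR.split hsym hl hst hst'
  have hBR : ∀ w ∈ s :: l₁.reverse, w ∈ R := fun w hw => hl ▸ List.cons_reverse_subset hw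
  have ht'B : t' ∉ s :: l₁.reverse := by
    simpa [hst'.symm] using hR.end_notMem_of_eq_append hl
  refine reachesFlexibly_of_ne hS (hB.append_tail hsym hR₂ ha fun w hwB hwR₂ => ?_) hx
    (fun w hw => Or.inl (hl ▸ List.mem_append_right l₁ hw)) (fun w hw => ?_)
  · rcases hdisj w (hBR w hwB) hwR₂ with rfl | rfl
    · rfl
    · exact absurd hwB ht'B
  · rcases List.mem_append.mp hw with h | h
    · exact Or.inl (hBR w h)
    · exact Or.inr (List.mem_of_mem_tail h)

theorem IsFunnel.reachesFlexibly_append (hsym : ∀ u v, col u v = col v u)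
    (hU : IsFunnel G col U t β) (hR : IsPCPathWithChar G col R t aR b t') (hβ : β ≠ aR)
    (hRU : ∀ w ∈ R, w ∈ U → w = t) (hs : s ∈ U) (hst : s ≠ t) :
    ReachesFlexibly G col (U ∪ {w | w ∈ R}) s t' b := by
  intro c
  obtain ⟨ρ, x, hxc, hρ, hρU⟩ := hU.2 s hs hst c
  refine ⟨ρ ++ R.tail, x, hxc,
    hρ.append_tail hsym hR hβ fun w hw hwR => hRU w hwR (hρU w hw), fun w hw => ?_⟩
  rcases List.mem_append.mp hw with h | h
  · exact Or.inl (hρU w h)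
  · exact Or.inr (List.mem_of_mem_tail h)

theorem IsFunnel.reroute (hsym : ∀ u v, col u v = col v u) {B : List V} {x aB : γ}
    (hU : IsFunnel G col U t β) (hR : IsPCPathWithChar G col R t aR b t') (hβ : β ≠ aR)
    (hRU : ∀ w ∈ R, w ∈ U → w = t) (hB : IsPCPathWithChar G col B s x aB t) (haB : aB ≠ aR)
    (hsU : s ∉ U) (hBR : ∀ w ∈ B, w ∈ R → w = t) :
    ∃ ρ, IsPCPathWithChar G col ρ s x b t' ∧ ∀ w ∈ ρ, w ∈ U ∨ w ∈ R ∨ w ∈ B := by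
  classical
  -- follow `B` up to its first vertex `z` in `U`, then go inside `U` to `t` and along `R`
  obtain ⟨z, l₁, l₂, hl₁, hzU, hBz, -⟩ :=
    List.exists_of_eraseP (p := fun w => decide (w ∈ U)) hB.end_mem (by simpa using hU.1)
  simp only [decide_eq_true_eq] at hl₁ hzU
  by_cases hzt : z = t
  · subst hzt
    refine ⟨B ++ R.tail, hB.append_tail hsym hR haB hBR, fun w hw => ?_⟩
    rcases List.mem_append.mp hw with h | h
    · exact Or.inr (Or.inr h)
    · exact Or.inr (Or.inl (List.mem_of_mem_tail h))
  obtain ⟨d, hB'⟩ := hB.takeUntil hBz fun h => hsU (h ▸ hzU)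
  obtain ⟨τ, y, hyd, hτ, hτU⟩ := hU.reachesFlexibly_append hsym hR hβ hRU hzU hzt d
  refine ⟨(l₁ ++ [z]) ++ τ.tail, hB'.append_tail hsym hτ hyd.symm fun w hw hwτ => ?_,
    fun w hw => ?_⟩
  · rcases List.mem_append.mp hw with h | h
    · rcases hτU w hwτ with hwU | hwR
      · exact absurd hwU (hl₁ w h)
      · exact absurd (hBR w (by simp [hBz, h]) hwR ▸ hU.1) (hl₁ w h)
    · exact List.mem_singleton.mp h
  · rcases List.mem_append.mp hw with h | h
    · exact Or.inr (Or.inr (by simp only [hBz, List.mem_append, List.mem_cons] at h ⊢; tauto))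
    · exact (hτU w (List.mem_of_mem_tail h)).elim Or.inl (Or.inr ∘ Or.inl)

theorem IsFunnel.reachesFlexibly_of_mem_second_path (hsym : ∀ u v, col u v = col v u)
    (hU : IsFunnel G col U t β) (hR : IsPCPathWithChar G col R t aR b t')
    (hR₂ : IsPCPathWithChar G col R₂ t aR₂ b t') (ha : aR ≠ aR₂) (hβ : β ≠ aR)
    (hdisj : ∀ w ∈ R, w ∈ R₂ → w = t ∨ w = t') (hRU : ∀ w ∈ R, w ∈ U → w = t)
    (hs : s ∈ R₂) (hsU : s ∉ U) (hsR : s ∉ R) :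
    ReachesFlexibly G col (U ∪ {w | w ∈ R} ∪ {w | w ∈ R₂}) s t' b := by
  have hst' : s ≠ t' := fun h => hsR (h ▸ hR.end_mem)
  obtain ⟨l₁, l₂, hl⟩ := List.append_of_mem hs
  obtain ⟨x₁, x₂, hx, hS, hB⟩ := hR₂.split hsym hl (fun h => hsU (h ▸ hU.1)) hst'
  have hBR₂ : ∀ w ∈ s :: l₁.reverse, w ∈ R₂ := fun w hw => hl ▸ List.cons_reverse_subset hw
  have ht'B : t' ∉ s :: l₁.reverse := by
    simpa [hst'.symm] using hR₂.end_notMem_of_eq_append hl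
  obtain ⟨ρ, hρ, hρU⟩ := hU.reroute hsym hR hβ hRU hB ha.symm hsU fun w hwB hwR =>
    (hdisj w hwR (hBR₂ w hwB)).resolve_right fun h => ht'B (h ▸ hwB)
  refine reachesFlexibly_of_ne hS hρ hx (fun w hw => Or.inr (hl ▸ List.mem_append_right l₁ hw))
    fun w hw => ?_
  rcases hρU w hw with h | h | h
  · exact Or.inl (Or.inl h)
  · exact Or.inl (Or.inr h)
  · exact Or.inr (hBR₂ w h)

theorem IsFunnel.grow (hsym : ∀ u v, col u v = col v u) (hU : IsFunnel G col U t β)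
    (hR : IsPCPathWithChar G col R t aR b t') (hR₂ : IsPCPathWithChar G col R₂ t aR₂ b t')
    (ha : aR ≠ aR₂) (hβ : β ≠ aR) (hdisj : ∀ w ∈ R, w ∈ R₂ → w = t ∨ w = t')
    (hRU : ∀ w ∈ R, w ∈ U → w = t) :
    IsFunnel G col (U ∪ {w | w ∈ R} ∪ {w | w ∈ R₂}) t' b := by
  refine ⟨Or.inl (Or.inr hR.end_mem), fun s hs hst' => ?_⟩
  by_cases hsR : s ∈ R
  · refine (reachesFlexibly_of_mem_path hsym hR hR₂ ha hdisj hsR hst').mono ?_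
    rintro w (h | h)
    · exact Or.inl (Or.inr h)
    · exact Or.inr h
  by_cases hsU : s ∈ U
  · exact (hU.reachesFlexibly_append hsym hR hβ hRU hsU
      fun h => hsR (h ▸ hR.start_mem)).mono Set.subset_union_left
  have hsR₂ : s ∈ R₂ := by simpa [hsR, hsU] using hs
  exact hU.reachesFlexibly_of_mem_second_path hsym hR hR₂ ha hβ hdisj hRU hsR₂ hsU hsR

theorem IsFunnel.exists_isPCCycle (hsym : ∀ u v, col u v = col v u) {X : List V} {a : γ}
    (hU : IsFunnel G col U t β) (hX : IsPCPathWithChar G col X t a b t') (ha : a ≠ β)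
    (hXU : ∃ w ∈ X, w ∈ U ∧ w ≠ t) :
    ∃ C, IsPCCycle G col C := by
  classical
  obtain ⟨w₀, hw₀X, hw₀⟩ := hXU
  -- `z` is the first vertex of `X` in `U` after `t`
  obtain ⟨z, l₁, l₂, hl₁, hz, hXz, -⟩ :=
    List.exists_of_eraseP (p := fun w => decide (w ∈ U ∧ w ≠ t)) hw₀X (by simpa using hw₀)
  simp only [decide_eq_true_eq] at hl₁ hz
  obtain ⟨d, hX'⟩ := hX.takeUntil hXz hz.2
  obtain ⟨σ, x, hxd, hσ, hσU⟩ := hU.2 z hz.1 hz.2 d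
  refine exists_isPCCycle_of_paths hsym hX' (hσ.reverse hsym) ha hxd.symm fun w hw hwσ => ?_
  rcases List.mem_append.mp hw with h | h
  · exact Or.inl (by_contra fun hwt => hl₁ w h ⟨hσU w (List.mem_reverse.mp hwσ), hwt⟩)
  · exact Or.inr (List.mem_singleton.mp h)

theorem IsFunnel.exists_gt (hsym : ∀ u v, col u v = col v u) (hno : ¬∃ C, IsPCCycle G col C)
    {P Q : List V} {a₁ a₂ : γ} (hU : IsFunnel G col U t β)
    (hP : IsPCPathWithChar G col P t a₁ b t') (hQ : IsPCPathWithChar G col Q t a₂ b t')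
    (ha : a₁ ≠ a₂) (hdisj : ∀ w ∈ P, w ∈ Q → w = t ∨ w = t') :
    ∃ U', U < U' ∧ IsFunnel G col U' t' b := by
  wlog hβ : β ≠ a₁ generalizing P Q a₁ a₂
  · exact this hQ hP ha.symm (fun w hw hw' => hdisj w hw' hw) (not_not.mp hβ ▸ ha)
  have hPU : ∀ w ∈ P, w ∈ U → w = t := fun w hw hwU => by_contra fun hwt =>
    hno (hU.exists_isPCCycle hsym hP hβ.symm ⟨w, hw, hwU, hwt⟩)
  have ht'U : t' ∉ U := fun h => hP.start_ne_end (hPU t' hP.end_mem h).symm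
  refine ⟨_, (Set.ssubset_iff_of_subset fun w hw => Or.inl (Or.inl hw)).mpr
    ⟨t', Or.inl (Or.inr hP.end_mem), ht'U⟩, hU.grow hsym hP hQ ha hβ hdisj hPU⟩

end Funnel

end

/-- **Theorem 4.** If in an edge-colored graph `G` every vertex `v` admits a vertex `v'`
and two internally vertex-disjoint PC paths from `v` to `v'` whose first edges at `v`
have distinct colors, then `G` contains a PC cycle. -/
theorem stmt3 {V γ : Type*} [Fintype V] [Nonempty V]
    (G : SimpleGraph V) (col : V → V → γ) (hsym : ∀ u v, col u v = col v u)
    (h : ∀ v : V, ∃ (v' : V) (P Q : List V) (α₁ β₁ α₂ β₂ : γ),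
      IsPCPath G col P ∧ IsPCPath G col Q ∧
      HasChar col P v α₁ β₁ v' ∧ HasChar col Q v α₂ β₂ v' ∧
      α₁ ≠ α₂ ∧ ∀ w, w ∈ P → w ∈ Q → w = v ∨ w = v') :
    ∃ C : List V, IsPCCycle G col C := by
  by_contra hno
  have probe : ∀ v, ∃ (v' : V) (P Q : List V) (a₁ a₂ b : γ), a₁ ≠ a₂ ∧
      IsPCPathWithChar G col P v a₁ b v' ∧ IsPCPathWithChar G col Q v a₂ b v' ∧
      ∀ w ∈ P, w ∈ Q → w = v ∨ w = v' := by
    intro v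
    obtain ⟨v', P, Q, α₁, β₁, α₂, β₂, hP, hQ, hPc, hQc, hα, hdisj⟩ := h v
    obtain rfl : β₁ = β₂ := by_contra fun hβ =>
      hno (exists_isPCCycle_of_paths hsym ⟨hP, hPc⟩ ⟨hQ, hQc⟩ hα hβ hdisj)
    exact ⟨v', P, Q, α₁, α₂, β₁, hα, ⟨hP, hPc⟩, ⟨hQ, hQc⟩, hdisj⟩
  obtain ⟨v₀⟩ := ‹Nonempty V›
  obtain ⟨-, -, -, α, -⟩ := probe v₀
  obtain ⟨U, ⟨t, β, hU⟩, hmax⟩ := exists_maximal_of_wellFoundedGT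
    (fun U : Set V => ∃ t β, IsFunnel G col U t β) ⟨{v₀}, v₀, α, rfl, fun s hs hs' => absurd hs hs'⟩
  obtain ⟨t', P, Q, a₁, a₂, b, ha, hP, hQ, hdisj⟩ := probe t
  obtain ⟨U', hUU', hU'⟩ := hU.exists_gt hsym hno hP hQ ha hdisj
  exact hUU'.not_ge (hmax ⟨t', b, hU'⟩ hUU'.le)
end

section
/- Let H be an edge-colored complete graph containing no properly colored cycle. Then there exists a vertex z ∈ V(H) such that for every vertex w ≠ z and every PC path P from z to w, the color of the first edge of P (the edge at z) equals col(zw), the color of the edge joining z and w. -/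
/-
An edge-coloured complete graph without PC cycles has a monochromatic vertex `z`, which gives the
theorem at once: the first edge `zb` of a PC path from `z` to `w` has the colour of every edge at
`z`, in particular that of `zw`. A monochromatic vertex is found by induction on the vertex set,
excluding only PC triangles and PC 4-cycles. Let `z` be monochromatic of colour `c` in `s` and add
a vertex `v`. If `zv` has colour `c`, or all edges from `v` into `s` share the colour of `vz`, we
are done. Otherwise some `u ∈ s` has `col v u ≠ col v z ≠ c`, so the triangle `zuv` forces
`col u v = c`, and then the 4-cycles `u w z v` force every edge `uw` to have colour `c` as well:
`u` is monochromatic.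
-/

section PCCycles

variable {V γ : Type*} {col : V → V → γ}

lemma isPCCycle_top_triangle {a b c : V} (hab : a ≠ b) (hbc : b ≠ c) (hac : a ≠ c)
    (h₁ : col a b ≠ col b c) (h₂ : col b c ≠ col c a) (h₃ : col c a ≠ col a b) :
    IsPCCycle ⊤ col [a, b, c] := by
  refine ⟨by simp, by simp [hab, hbc, hac], ?_, ?_⟩
  · change List.IsChain _ _
    simp [hab, hbc, hac.symm]
  · intro x y z hxyz
    simp [List.infix_cons_iff] at hxyz
    rcases hxyz with ⟨rfl, rfl, rfl⟩ | ⟨rfl, rfl, rfl⟩ | ⟨rfl, rfl, rfl⟩ <;> assumption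

lemma isPCCycle_top_square {a b c d : V} (hab : a ≠ b) (hac : a ≠ c) (had : a ≠ d)
    (hbc : b ≠ c) (hbd : b ≠ d) (hcd : c ≠ d)
    (h₁ : col a b ≠ col b c) (h₂ : col b c ≠ col c d) (h₃ : col c d ≠ col d a)
    (h₄ : col d a ≠ col a b) :
    IsPCCycle ⊤ col [a, b, c, d] := by
  refine ⟨by simp, by simp [hab, hac, had, hbc, hbd, hcd], ?_, ?_⟩
  · change List.IsChain _ _
    simp [hab, hbc, hcd, had.symm]
  · intro x y z hxyz
    simp [List.infix_cons_iff] at hxyz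
    rcases hxyz with ⟨rfl, rfl, rfl⟩ | ⟨rfl, rfl, rfl⟩ | ⟨rfl, rfl, rfl⟩ | ⟨rfl, rfl, rfl⟩ <;>
      assumption

def IsMonochromaticIn (col : V → V → γ) (s : Finset V) (z : V) (c : γ) : Prop :=
  ∀ u ∈ s, u ≠ z → col z u = c

variable (hsym : ∀ u v, col u v = col v u) (hnoPC : ∀ l : List V, ¬ IsPCCycle ⊤ col l)
include hsym hnoPC

lemma isMonochromaticIn_insert_of_col_ne [DecidableEq V] {s : Finset V} {v z u : V} {c : γ}
    (hv : v ∉ s) (hz : z ∈ s) (hzc : IsMonochromaticIn col s z c) (hzv : col z v ≠ c)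
    (hu : u ∈ s) (huz : u ≠ z) (hvu : col v u ≠ col v z) :
    IsMonochromaticIn col (insert v s) u c := by
  have hvz : v ≠ z := fun h => hv (h ▸ hz)
  have huv : u ≠ v := fun h => hv (h ▸ hu)
  have hzu : col z u = c := hzc u hu huz
  have huv_c : col u v = c := by
    by_contra huv_ne
    refine hnoPC _ (isPCCycle_top_triangle (Ne.symm huz) huv hvz.symm ?_ ?_ ?_)
    · rw [hzu]; exact Ne.symm huv_ne
    · rwa [hsym]
    · rwa [hsym, hzu]
  intro w hw hwu
  rcases Finset.mem_insert.1 hw with rfl | hw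
  · exact huv_c
  by_cases hwz : w = z
  · rw [hwz, hsym, hzu]
  have hwv : w ≠ v := fun h => hv (h ▸ hw)
  have hzw : col w z = c := by rw [hsym]; exact hzc w hw hwz
  by_contra huw
  refine hnoPC _ (isPCCycle_top_square (Ne.symm hwu) huz huv hwz hwv hvz.symm ?_ ?_ ?_ ?_)
  · rwa [hzw]
  · rwa [hzw, Ne, eq_comm]
  · rwa [hsym v u, huv_c]
  · rw [hsym v u, huv_c]; exact Ne.symm huw

lemma exists_isMonochromaticIn_insert [DecidableEq V] {s : Finset V} {v z : V} {c : γ}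
    (hv : v ∉ s) (hz : z ∈ s) (hzc : IsMonochromaticIn col s z c) :
    ∃ y ∈ insert v s, ∃ c', IsMonochromaticIn col (insert v s) y c' := by
  by_cases hzv : col z v = c
  · refine ⟨z, Finset.mem_insert_of_mem hz, c, fun u hu huz => ?_⟩
    rcases Finset.mem_insert.1 hu with rfl | hu
    exacts [hzv, hzc u hu huz]
  by_cases hv_mono : ∀ u ∈ s, u ≠ z → col v u = col v z
  · refine ⟨v, Finset.mem_insert_self v s, col v z, fun u hu huv => ?_⟩
    rcases Finset.mem_insert.1 hu with rfl | hu
    · exact absurd rfl huv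
    by_cases huz : u = z
    · rw [huz]
    · exact hv_mono u hu huz
  push Not at hv_mono
  obtain ⟨u, hu, huz, hvu⟩ := hv_mono
  exact ⟨u, Finset.mem_insert_of_mem hu, c,
    isMonochromaticIn_insert_of_col_ne hsym hnoPC hv hz hzc hzv hu huz hvu⟩

lemma Finset.exists_isMonochromaticIn {s : Finset V} (hs : s.Nonempty) :
    ∃ z ∈ s, ∃ c, IsMonochromaticIn col s z c := by
  classical
  induction s using Finset.induction_on with
  | empty => exact absurd hs Finset.not_nonempty_empty
  | @insert v s hv ih =>
    rcases s.eq_empty_or_nonempty with rfl | hs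
    · exact ⟨v, Finset.mem_insert_self v ∅, col v v, fun u hu huv => absurd (by simpa using hu) huv⟩
    obtain ⟨z, hz, c, hzc⟩ := ih hs
    exact exists_isMonochromaticIn_insert hsym hnoPC hv hz hzc

lemma exists_monochromatic_vertex [Fintype V] [Nonempty V] :
    ∃ z c, ∀ u, u ≠ z → col z u = c := by
  obtain ⟨z, -, c, hzc⟩ := Finset.exists_isMonochromaticIn hsym hnoPC Finset.univ_nonempty
  exact ⟨z, c, fun u => hzc u (Finset.mem_univ u)⟩

end PCCycles

/-- If an edge-colored complete graph `H` contains no PC cycle, then there is a vertex `z`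
such that for every vertex `w ≠ z` and every PC path from `z` to `w`, the color of the
first edge of the path (at `z`) equals `col(zw)`. -/
theorem stmt7 {V γ : Type*} [Fintype V] [Nonempty V]
    (col : V → V → γ) (hsym : ∀ u v, col u v = col v u)
    (hnoPC : ∀ l : List V, ¬ IsPCCycle (⊤ : SimpleGraph V) col l) :
    ∃ z : V, ∀ w : V, w ≠ z → ∀ (b : V) (t : List V),
      IsPCPath (⊤ : SimpleGraph V) col (z :: b :: t) →
      (z :: b :: t).getLast? = some w → col z b = col z w := by
  obtain ⟨z, c, hzc⟩ := exists_monochromatic_vertex hsym hnoPC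
  refine ⟨z, fun w hwz b t hpath _ => ?_⟩
  have hbz : b ≠ z := by
    have hnodup := hpath.2.1
    simp only [List.nodup_cons, List.mem_cons, not_or] at hnodup
    exact Ne.symm hnodup.1.1
  rw [hzc b hbz, hzc w hwz]
end

section
/- Let C_1 and C_2 be vertex-disjoint PC cycles in an edge-colored complete graph G with V(G) = V(C_1) ∪ V(C_2), and suppose there exists an assignment f : V(C_1) → colors such that col(uv) = f(u) or col(uv) = f(v) for all distinct vertices u, v ∈ V(C_1), and col(uw) = f(u) for all u ∈ V(C_1) and w ∈ V(C_2). Then G contains no PC cycle C with V(C) = V(C_1) ∪ V(C_2). -/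
/-! Since `C` meets both cycles, it has an edge `wu` entering `V(C₁)` from `V(C₂)`, and that
edge has colour `f u`. The next edge `uv` must avoid that colour, so `v ∉ V(C₂)` (those edges
have colour `f u`) and hence `col u v = f v`. Thus every edge of `C` enters `V(C₁)` in the
colour `f` of its head, and `C` never visits `V(C₂)`. -/

namespace List

variable {α : Type*}

theorem triple_getElem_infix (l : List α) {i : ℕ} (h : i + 2 < l.length) :
    [l[i], l[i + 1], l[i + 2]] <:+: l := by
  refine ⟨l.take i, l.drop (i + 3), ?_⟩
  conv_rhs => rw [← take_append_drop i l]
  rw [drop_eq_getElem_cons (i := i) (by omega), drop_eq_getElem_cons (i := i + 1) (by omega),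
    drop_eq_getElem_cons h]
  simp

theorem getElem_append_take_two (l : List α) (hl : 2 ≤ l.length) {k : ℕ}
    (hk : k < l.length + 2) :
    (l ++ l.take 2)[k]'(by simp; omega) = l[k % l.length]'(Nat.mod_lt _ (by omega)) := by
  rcases lt_or_ge k l.length with h | h
  · simp only [getElem_append_left h, Nat.mod_eq_of_lt h]
  · rw [getElem_append_right h, getElem_take]
    congr 1
    rw [Nat.mod_eq_sub_mod h, Nat.mod_eq_of_lt (by omega)]

theorem triple_getElem_mod_infix (l : List α) (hl : 2 ≤ l.length) (i : ℕ) :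
    [l[i % l.length]'(Nat.mod_lt _ (by omega)), l[(i + 1) % l.length]'(Nat.mod_lt _ (by omega)),
      l[(i + 2) % l.length]'(Nat.mod_lt _ (by omega))] <:+: l ++ l.take 2 := by
  have hj : i % l.length < l.length := Nat.mod_lt _ (by omega)
  have key := (l ++ l.take 2).triple_getElem_infix (i := i % l.length) (by simp; omega)
  rw [getElem_append_take_two l hl (by omega), getElem_append_take_two l hl (by omega),
    getElem_append_take_two l hl (by omega)] at key
  simpa only [Nat.mod_mod, Nat.mod_add_mod] using key

end List

theorem Function.Periodic.forall_of_succ {P : ℕ → Prop} {n : ℕ} (hP : Function.Periodic P n)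
    (hn : 0 < n) (hstep : ∀ i, P i → P (i + 1)) {i₀ : ℕ} (h₀ : P i₀) (i : ℕ) : P i := by
  have hshift : P (i + i₀ * n) := by
    induction i + i₀ * n, (by nlinarith : i₀ ≤ i + i₀ * n) using Nat.le_induction with
    | base => exact h₀
    | succ k _ ih => exact hstep k ih
  have := hP.nat_mul i₀ i
  simp only [Nat.cast_id] at this
  rwa [this] at hshift

theorem Function.Periodic.exists_not_and_succ {α : Type*} {g : ℕ → α} {n : ℕ}
    (hg : Function.Periodic g n) (hn : 0 < n) {p : α → Prop} {i j : ℕ} (hi : p (g i))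
    (hj : ¬ p (g j)) : ∃ k, ¬ p (g k) ∧ p (g (k + 1)) := by
  by_contra! h
  exact Function.Periodic.forall_of_succ (P := fun k => ¬ p (g k))
    (fun k => by simp only [hg k]) hn h hj i hi

namespace IsPCCycle

variable {V γ : Type*} {G : SimpleGraph V} {col : V → V → γ} {C : List V}

theorem exists_periodic_walk (hC : IsPCCycle G col C) :
    ∃ g : ℕ → V, Function.Periodic g C.length ∧ (∀ v ∈ C, ∃ i, g i = v) ∧
      ∀ i, G.Adj (g i) (g (i + 1)) ∧ col (g i) (g (i + 1)) ≠ col (g (i + 1)) (g (i + 2)) := by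
  obtain ⟨hlen, -, hadj, hpc⟩ := hC
  refine ⟨fun i => C[i % C.length]'(Nat.mod_lt _ (by omega)), fun i => by simp, ?_, fun i => ?_⟩
  · intro v hv
    obtain ⟨i, hi, rfl⟩ := List.getElem_of_mem hv
    exact ⟨i, by simp [Nat.mod_eq_of_lt hi]⟩
  · have htriple := C.triple_getElem_mod_infix (by omega) i
    exact ⟨(List.isChain_cons_cons.1 (hadj.infix htriple)).1, hpc _ _ _ htriple⟩

theorem exists_mem (hC : IsPCCycle G col C) : ∃ v, v ∈ C :=
  C.exists_mem_of_ne_nil (by rintro rfl; simp [IsPCCycle] at hC)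

end IsPCCycle

section Barrier

variable {V γ : Type*} (col : V → V → γ) (c₁ : List V) (f : V → γ)

def ColoredAtHead (a b : V) : Prop := b ∈ c₁ ∧ col a b = f b

variable {col c₁ f} {c₂ : List V}

theorem ColoredAtHead.next (hspan : ∀ w : V, w ∈ c₁ ∨ w ∈ c₂)
    (hf : ∀ u v, u ∈ c₁ → v ∈ c₁ → u ≠ v → col u v = f u ∨ col u v = f v)
    (hf' : ∀ u w, u ∈ c₁ → w ∈ c₂ → col u w = f u) {a b c : V}
    (h : ColoredAtHead col c₁ f a b) (hbc : b ≠ c) (hpc : col a b ≠ col b c) :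
    ColoredAtHead col c₁ f b c := by
  obtain ⟨hb, hab⟩ := h
  have hcol : col b c ≠ f b := hab ▸ hpc.symm
  rcases hspan c with hc | hc
  · exact ⟨hc, (hf b c hb hc hbc).resolve_left hcol⟩
  · exact absurd (hf' b c hb hc) hcol

end Barrier

theorem stmt9_general {V γ : Type*}
    (col : V → V → γ) (hsym : ∀ u v, col u v = col v u)
    (c₁ c₂ : List V) (f : V → γ)
    (hC₁ : IsPCCycle (⊤ : SimpleGraph V) col c₁)
    (hC₂ : IsPCCycle (⊤ : SimpleGraph V) col c₂)
    (hdisj : ∀ w, w ∈ c₁ → w ∉ c₂)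
    (hspan : ∀ w : V, w ∈ c₁ ∨ w ∈ c₂)
    (hf : ∀ u v, u ∈ c₁ → v ∈ c₁ → u ≠ v → col u v = f u ∨ col u v = f v)
    (hf' : ∀ u w, u ∈ c₁ → w ∈ c₂ → col u w = f u) :
    ¬ ∃ C : List V, IsPCCycle (⊤ : SimpleGraph V) col C ∧
        ∀ w : V, w ∈ C ↔ (w ∈ c₁ ∨ w ∈ c₂) := by
  rintro ⟨C, hC, hmem⟩
  obtain ⟨g, hg, hsurj, hwalk⟩ := hC.exists_periodic_walk
  have hn : 0 < C.length := by have := hC.1; omega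
  obtain ⟨u, hu⟩ := hC₁.exists_mem
  obtain ⟨w, hw⟩ := hC₂.exists_mem
  obtain ⟨i, rfl⟩ := hsurj u ((hmem u).2 (.inl hu))
  obtain ⟨j, rfl⟩ := hsurj w ((hmem w).2 (.inr hw))
  obtain ⟨k, hk, hk₁⟩ := hg.exists_not_and_succ hn (p := (· ∈ c₁)) hu (fun h => hdisj _ h hw)
  have hcross : ColoredAtHead col c₁ f (g k) (g (k + 1)) :=
    ⟨hk₁, hsym _ _ ▸ hf' _ _ hk₁ ((hspan _).resolve_left hk)⟩
  have hall : ∀ i, ColoredAtHead col c₁ f (g i) (g (i + 1)) :=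
    Function.Periodic.forall_of_succ (fun i => by simp only [add_right_comm i C.length, hg _]) hn
      (fun i h => h.next hspan hf hf' (hwalk (i + 1)).1.ne (hwalk i).2) hcross
  have hj : g (j + C.length - 1 + 1) ∈ c₁ := (hall _).1
  rw [Nat.sub_add_cancel (by omega), hg] at hj
  exact hdisj _ hj hw

/-- **Degenerate-set barrier.** Let `C₁` and `C₂` be vertex-disjoint PC cycles spanning an
edge-colored complete graph. If there is `f : V(C₁) → colors` with `col(uv) = f(u)` or
`f(v)` for all distinct `u, v ∈ V(C₁)` and `col(uw) = f(u)` for all `u ∈ V(C₁)`,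
`w ∈ V(C₂)`, then there is no PC cycle `C` with `V(C) = V(C₁) ∪ V(C₂)`. -/
theorem stmt9 {V γ : Type*} [Fintype V]
    (col : V → V → γ) (hsym : ∀ u v, col u v = col v u)
    (c₁ c₂ : List V) (f : V → γ)
    (hC₁ : IsPCCycle (⊤ : SimpleGraph V) col c₁)
    (hC₂ : IsPCCycle (⊤ : SimpleGraph V) col c₂)
    (hdisj : ∀ w, w ∈ c₁ → w ∉ c₂)
    (hspan : ∀ w : V, w ∈ c₁ ∨ w ∈ c₂)
    (hf : ∀ u v, u ∈ c₁ → v ∈ c₁ → u ≠ v → col u v = f u ∨ col u v = f v)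
    (hf' : ∀ u w, u ∈ c₁ → w ∈ c₂ → col u w = f u) :
    ¬ ∃ C : List V, IsPCCycle (⊤ : SimpleGraph V) col C ∧
        ∀ w : V, w ∈ C ↔ (w ∈ c₁ ∨ w ∈ c₂) :=
  stmt9_general col hsym c₁ c₂ f hC₁ hC₂ hdisj hspan hf hf'
end
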